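/- A nontrivial finite-dimensional nilpotent real Jordan algebra N admits no Jordan-Einstein metric: there is no inner product ⟨·,·⟩ on N and constant c ∈ ℝ such that Ric = c⟨·,·⟩, where Ric(X,Y) = ⟨MX,Y⟩ − ¼⟨H,XY⟩ with ⟨MX,Y⟩ = −½Σ_{i,j}⟨XE_i,E_j⟩⟨YE_i,E_j⟩ + ¼Σ_{i,j}⟨E_iE_j,X⟩⟨E_iE_j,Y⟩ and H = Σ_i E_i² for an orthonormal basis {E_i}. -/

import Mathlib

open RealInnerProductSpace

/-- The descending power series A⁰ = A, A^{k+1} = A·A^k of a (Jordan) algebra. -/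
def jordanPow {V : Type*} [AddCommGroup V] [Module ℝ V]
    (mul : V →ₗ[ℝ] V →ₗ[ℝ] V) : ℕ → Submodule ℝ V
  | 0 => ⊤
  | (k + 1) => Submodule.span ℝ {z | ∃ x y, y ∈ jordanPow mul k ∧ z = mul x y}


/-!
A nilpotent algebra has a nonzero annihilator element `Z`: any nonzero element of the last
nonzero term of `A ⊇ A² ⊇ ⋯`. For it `⟪H, Z Z⟫` and the first sum in `⟪M Z, Z⟫` vanish, so
`Ric(Z, Z) ≥ 0` and an Einstein constant must be `≥ 0`. On the other hand, by Parseval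
`tr M = -¼ ∑ ‖E_i E_j‖²`, so `tr Ric = -¼ ∑ ‖E_i E_j‖² - ¼ ‖H‖² < 0` once the product is nonzero.
-/

open Finset

theorem exists_ne_zero_forall_mul_eq_zero_of_jordanPow_eq_bot {V : Type*} [AddCommGroup V]
    [Module ℝ V] [Nontrivial V] (mul : V →ₗ[ℝ] V →ₗ[ℝ] V) (hnil : ∃ m, jordanPow mul m = ⊥) :
    ∃ Z : V, Z ≠ 0 ∧ ∀ X, mul X Z = 0 := by
  classical
  have hm0 : Nat.find hnil ≠ 0 := fun h =>
    top_ne_bot (h ▸ Nat.find_spec hnil : jordanPow mul 0 = ⊥)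
  obtain ⟨k, hk⟩ := Nat.exists_eq_add_one_of_ne_zero hm0
  have hk_bot : jordanPow mul (k + 1) = ⊥ := hk ▸ Nat.find_spec hnil
  obtain ⟨Z, hZk, hZ0⟩ :=
    (Submodule.ne_bot_iff _).mp (Nat.find_min hnil (by omega : k < Nat.find hnil))
  refine ⟨Z, hZ0, fun X => ?_⟩
  rw [← Submodule.mem_bot ℝ, ← hk_bot]
  exact Submodule.subset_span ⟨X, Z, hZk, rfl⟩

section OrthonormalBasis

variable {V ι : Type*} [NormedAddCommGroup V] [InnerProductSpace ℝ V] [Fintype ι]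
  (b : OrthonormalBasis ι ℝ V) (mul : V →ₗ[ℝ] V →ₗ[ℝ] V)

theorem OrthonormalBasis.exists_mul_ne_zero (h : ∃ X Y, mul X Y ≠ 0) :
    ∃ i j, mul (b i) (b j) ≠ 0 := by
  contrapose! h
  have hmul : mul = 0 := b.toBasis.ext fun i => b.toBasis.ext fun j => by simpa using h i j
  simp [hmul]

theorem OrthonormalBasis.sum_sum_norm_mul_sq_pos (h : ∃ i j, mul (b i) (b j) ≠ 0) :
    0 < ∑ i, ∑ j, ‖mul (b i) (b j)‖ ^ 2 := by
  obtain ⟨i, j, hij⟩ := h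
  refine sum_pos' (fun _ _ => by positivity) ⟨i, mem_univ i, ?_⟩
  exact sum_pos' (fun _ _ => by positivity) ⟨j, mem_univ j, by positivity⟩

variable {b mul} {M : V →ₗ[ℝ] V}
  (hM : ∀ X, ⟪M X, X⟫ =
    -(1/2) * ∑ i, ∑ j, ⟪mul X (b i), b j⟫ * ⟪mul X (b i), b j⟫
    + (1/4) * ∑ i, ∑ j, ⟪mul (b i) (b j), X⟫ * ⟪mul (b i) (b j), X⟫)
include hM

theorem OrthonormalBasis.sum_inner_apply_self :
    ∑ k, ⟪M (b k), b k⟫ = -(1/4) * ∑ i, ∑ j, ‖mul (b i) (b j)‖ ^ 2 := by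
  have hswap : ∑ k, ∑ i, ∑ j, ⟪mul (b i) (b j), b k⟫ ^ 2 = ∑ i, ∑ j, ‖mul (b i) (b j)‖ ^ 2 := by
    rw [sum_comm]
    exact sum_congr rfl fun i _ => by rw [sum_comm]; simp_rw [b.sum_sq_inner_left]
  simp_rw [hM, ← sq, b.sum_sq_inner_left]
  rw [sum_add_distrib, ← mul_sum, ← mul_sum, hswap]
  ring

theorem inner_apply_self_nonneg_of_forall_mul_eq_zero {Z : V} (hZ : ∀ X, mul Z X = 0) :
    0 ≤ ⟪M Z, Z⟫ := by
  rw [hM]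
  simp only [hZ, inner_zero_left, sum_const_zero, mul_zero, zero_add]
  exact mul_nonneg (by norm_num) (sum_nonneg fun _ _ => sum_nonneg fun _ _ => mul_self_nonneg _)

theorem OrthonormalBasis.ricci_trace_eq_of_einstein {H : V} (hH : H = ∑ i, mul (b i) (b i))
    {c : ℝ} (hEin : ∀ X, ⟪M X, X⟫ - (1/4) * ⟪H, mul X X⟫ = c * ⟪X, X⟫) :
    -(1/4) * ∑ i, ∑ j, ‖mul (b i) (b j)‖ ^ 2 - (1/4) * ‖H‖ ^ 2 = c * Fintype.card ι := by
  have htrace := sum_congr rfl fun k (_ : k ∈ univ) => hEin (b k)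
  rw [sum_sub_distrib, b.sum_inner_apply_self hM, ← mul_sum, ← inner_sum, ← hH,
    ← mul_sum] at htrace
  simpa [real_inner_self_eq_norm_sq, b.orthonormal.1] using htrace

end OrthonormalBasis

theorem nilpotent_no_einstein_general
    {V : Type*} [NormedAddCommGroup V] [InnerProductSpace ℝ V]
    {ι : Type*} [Fintype ι]
    (mul : V →ₗ[ℝ] V →ₗ[ℝ] V)
    (comm : ∀ X Y : V, mul X Y = mul Y X)
    (hnil : ∃ m : ℕ, jordanPow mul m = ⊥)
    (nontrivial : ∃ X Y : V, mul X Y ≠ 0)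
    (b : OrthonormalBasis ι ℝ V)
    (M : V →ₗ[ℝ] V)
    (hM : ∀ X Y : V, ⟪M X, Y⟫ =
      -(1/2) * ∑ i, ∑ j, ⟪mul X (b i), b j⟫ * ⟪mul Y (b i), b j⟫
      + (1/4) * ∑ i, ∑ j, ⟪mul (b i) (b j), X⟫ * ⟪mul (b i) (b j), Y⟫)
    (H : V) (hH : H = ∑ i, mul (b i) (b i))
    (c : ℝ) :
    ¬ (∀ X Y : V, ⟪M X, Y⟫ - (1/4) * ⟪H, mul X Y⟫ = c * ⟪X, Y⟫) := by
  intro hEin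
  have hMdiag := fun X => hM X X
  obtain ⟨X₀, Y₀, hXY⟩ := nontrivial
  have : Nontrivial V := ⟨Y₀, 0, fun h => hXY (by simp [h])⟩
  obtain ⟨Z, hZ0, hZ⟩ := exists_ne_zero_forall_mul_eq_zero_of_jordanPow_eq_bot mul hnil
  have hc : 0 ≤ c := by
    have hZ' X : mul Z X = 0 := (comm Z X).trans (hZ X)
    have hRicZ := hEin Z Z
    rw [hZ' Z, inner_zero_right, mul_zero, sub_zero] at hRicZ
    refine nonneg_of_mul_nonneg_left ?_ (real_inner_self_pos.2 hZ0)
    exact hRicZ ▸ inner_apply_self_nonneg_of_forall_mul_eq_zero hMdiag hZ'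
  have hS := b.sum_sum_norm_mul_sq_pos mul (b.exists_mul_ne_zero mul ⟨X₀, Y₀, hXY⟩)
  have htrace := b.ricci_trace_eq_of_einstein hMdiag hH fun X => hEin X X
  linarith [sq_nonneg ‖H‖, mul_nonneg hc (Nat.cast_nonneg (Fintype.card ι))]

/-- A nontrivial nilpotent Jordan algebra admits no
Jordan-Einstein metric: for every inner product (with orthonormal basis {E_i})
and every constant c, the Ricci tensor Ric(X,Y) = ⟨MX,Y⟩ − ¼⟨H,XY⟩ is not
equal to c⟨·,·⟩. -/
theorem nilpotent_no_einstein
    {V : Type*} [NormedAddCommGroup V] [InnerProductSpace ℝ V] [FiniteDimensional ℝ V]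
    {ι : Type*} [Fintype ι]
    (mul : V →ₗ[ℝ] V →ₗ[ℝ] V)
    (comm : ∀ X Y : V, mul X Y = mul Y X)
    (jordan : ∀ X Y : V, mul X (mul (mul X X) Y) = mul (mul X X) (mul X Y))
    (hnil : ∃ m : ℕ, jordanPow mul m = ⊥)
    (nontrivial : ∃ X Y : V, mul X Y ≠ 0)
    (b : OrthonormalBasis ι ℝ V)
    (M : V →ₗ[ℝ] V)
    (hM : ∀ X Y : V, ⟪M X, Y⟫ =
      -(1/2) * ∑ i, ∑ j, ⟪mul X (b i), b j⟫ * ⟪mul Y (b i), b j⟫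
      + (1/4) * ∑ i, ∑ j, ⟪mul (b i) (b j), X⟫ * ⟪mul (b i) (b j), Y⟫)
    (H : V) (hH : H = ∑ i, mul (b i) (b i))
    (c : ℝ) :
    ¬ (∀ X Y : V, ⟪M X, Y⟫ - (1/4) * ⟪H, mul X Y⟫ = c * ⟪X, Y⟫) :=
  nilpotent_no_einstein_general mul comm hnil nontrivial b M hM H hH c
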